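/- arXiv:2504.07432 — 3 statements merged into one kernel-verified Lean document; each statement's English description precedes it below -/
import Mathlib

section
/- The region Ω = { (S,I,R,V,D,W) ∈ ℝ₊⁶ : S+I+R+V ≤ b/d_H, W ≤ ζb/(d_C d_H), D ≤ δb/(e d_H) } is positively invariant under the flow of the SIRVDW system: any solution with initial condition in Ω remains in Ω for all t ≥ 0. -/
lemma hasDerivAt_mul_abs (x : ℝ) : HasDerivAt (fun y : ℝ => y * |y|) (2 * |x|) x := by
  rcases lt_trichotomy x 0 with hx | hx | hx
  · have h : ∀ᶠ y in nhds x, -(y * y) = y * |y| := by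
      filter_upwards [eventually_lt_nhds hx] with y hy
      rw [abs_of_neg hy]; ring
    have h2 : HasDerivAt (fun y : ℝ => -(y * y)) (2 * |x|) x := by
      have h3 := ((hasDerivAt_id x).mul (hasDerivAt_id x)).neg
      have : -(1 * id x + id x * 1) = 2 * |x| := by
        simp [abs_of_neg hx]; ring
      rwa [this] at h3
    exact h2.congr_of_eventuallyEq (by filter_upwards [h] with y hy using hy.symm)
  · subst hx
    rw [hasDerivAt_iff_isLittleO]
    simp only [zero_mul, abs_zero, mul_zero, sub_zero]
    rw [Asymptotics.isLittleO_iff]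
    intro c hc
    filter_upwards [Metric.ball_mem_nhds 0 hc] with y hy
    simp only [Metric.mem_ball, Real.dist_eq, sub_zero] at hy
    simp only [smul_zero, sub_zero, Real.norm_eq_abs, abs_mul, abs_abs]
    nlinarith [abs_nonneg y, le_of_lt hy]
  · have h : ∀ᶠ y in nhds x, y * y = y * |y| := by
      filter_upwards [eventually_gt_nhds hx] with y hy
      rw [abs_of_pos hy]
    have h2 : HasDerivAt (fun y : ℝ => y * y) (2 * |x|) x := by
      have h3 := (hasDerivAt_id x).mul (hasDerivAt_id x)
      have : 1 * id x + id x * 1 = 2 * |x| := by simp [abs_of_pos hx]; ring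
      rwa [this] at h3
    exact h2.congr_of_eventuallyEq (by filter_upwards [h] with y hy using hy.symm)

lemma hasDerivAt_g (x : ℝ) :
    HasDerivAt (fun y : ℝ => y ^ 2 - y * |y|) (4 * min x 0) x := by
  have h1 : HasDerivAt (fun y : ℝ => y ^ 2) (2 * x) x := by
    simpa using hasDerivAt_pow 2 x
  have h2 := h1.sub (hasDerivAt_mul_abs x)
  have h3 : 2 * x - 2 * |x| = 4 * min x 0 := by
    rcases le_total x 0 with h | h
    · rw [min_eq_left h, abs_of_nonpos h]; ring
    · rw [min_eq_right h, abs_of_nonneg h]; ring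
  rwa [h3] at h2

lemma prod_lb {x y μ ν M : ℝ} (hμ : μ ≤ 0) (hν : ν ≤ 0) (hx : μ ≤ x) (hy : ν ≤ y)
    (hxM : |x| ≤ M) (hyM : |y| ≤ M) : M * (μ + ν) ≤ x * y := by
  have hM : 0 ≤ M := le_trans (abs_nonneg x) hxM
  rcases le_or_gt 0 x with h | h
  · have hx' : x ≤ M := le_trans (le_abs_self x) hxM
    nlinarith
  · have hy' : y ≤ M := le_trans (le_abs_self y) hyM
    nlinarith

lemma le_of_deriv_nonpos {f : ℝ → ℝ} (hf : Differentiable ℝ f) {t : ℝ} (ht : 0 ≤ t)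
    (h : ∀ s, 0 ≤ s → s ≤ t → deriv f s ≤ 0) : f t ≤ f 0 := by
  have ha : AntitoneOn f (Set.Icc 0 t) :=
    antitoneOn_of_deriv_nonpos (convex_Icc 0 t) hf.continuous.continuousOn
      hf.differentiableOn (fun x hx => by
        rw [interior_Icc] at hx; exact h x hx.1.le hx.2.le)
  exact ha (Set.left_mem_Icc.mpr ht) (Set.right_mem_Icc.mpr ht) ht

lemma min_mul_self (x : ℝ) : min x 0 * x = (min x 0) ^ 2 := by
  rcases le_total x 0 with h | h
  · rw [min_eq_left h]; ring
  · rw [min_eq_right h]; ring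

lemma g_eq (x : ℝ) : x ^ 2 - x * |x| = 2 * (min x 0) ^ 2 := by
  rcases le_total x 0 with h | h
  · rw [min_eq_left h, abs_of_nonpos h]; ring
  · rw [min_eq_right h, abs_of_nonneg h]; ring

lemma g_nonneg (x : ℝ) : 0 ≤ x ^ 2 - x * |x| := by
  rw [g_eq]; positivity

lemma g_zero {x : ℝ} (h : 0 ≤ x) : x ^ 2 - x * |x| = 0 := by
  rw [abs_of_nonneg h]; ring

lemma nonneg_of_g_zero {x : ℝ} (h : x ^ 2 - x * |x| = 0) : 0 ≤ x := by
  by_contra hc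
  push_neg at hc
  rw [abs_of_neg hc] at h
  nlinarith


lemma sirvdw_core (b dH ε θ v γ δ e ζ dC βW βI βD σ M2 A : ℝ)
    (hb : 0 < b) (hdH : 0 < dH) (hε : 0 < ε) (hθ : 0 < θ) (hv : 0 < v)
    (hγ : 0 < γ) (hδ : 0 < δ) (he : 0 < e) (hζ : 0 < ζ) (hdC : 0 < dC)
    (hβW : 0 < βW) (hβI : 0 < βI) (hβD : 0 < βD) (hσ0 : 0 ≤ σ) (hσ1 : σ ≤ 1)
    (hM2 : 0 ≤ M2)
    (hAS : ε + θ + 2 * M2 + M2 + v ≤ A)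
    (hAI : M2 * (βW + 2 * βI + βD + 1 + σ) + γ + δ + ζ ≤ A)
    (hAR : ε + γ ≤ A) (hAV : θ + M2 * σ + v + 2 * M2 ≤ A)
    (hAD : M2 * βD + δ ≤ A) (hAW : M2 * βW + ζ ≤ A)
    (xS xI xR xV xD xW mS mI mR mV mD mW : ℝ)
    (hmS0 : mS ≤ 0) (hmI0 : mI ≤ 0) (hmR0 : mR ≤ 0) (hmV0 : mV ≤ 0)
    (hmD0 : mD ≤ 0) (hmW0 : mW ≤ 0)
    (hmSle : mS ≤ xS) (hmIle : mI ≤ xI) (hmRle : mR ≤ xR) (hmVle : mV ≤ xV)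
    (hmDle : mD ≤ xD) (hmWle : mW ≤ xW)
    (idS : mS * xS = mS ^ 2) (idI : mI * xI = mI ^ 2) (idR : mR * xR = mR ^ 2)
    (idV : mV * xV = mV ^ 2) (idD : mD * xD = mD ^ 2) (idW : mW * xW = mW ^ 2)
    (hLb : |βW * xW + βI * xI + βD * xD| ≤ M2) (hSVb : |xS + σ * xV| ≤ M2) :
    4 * mS * (b + ε * xR + θ * xV - (βW * xW + βI * xI + βD * xD) * xS - (v + dH) * xS)
      + 4 * mI * ((βW * xW + βI * xI + βD * xD) * xS
          + σ * (βW * xW + βI * xI + βD * xD) * xV - (γ + δ + dH) * xI)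
      + 4 * mR * (γ * xI - (ε + dH) * xR)
      + 4 * mV * (v * xS - θ * xV - σ * (βW * xW + βI * xI + βD * xD) * xV - dH * xV)
      + 4 * mD * (δ * xI - e * xD)
      + 4 * mW * (ζ * xI - dC * xW) ≤
    A * (2 * mS ^ 2 + 2 * mI ^ 2 + 2 * mR ^ 2 + 2 * mV ^ 2 + 2 * mD ^ 2 + 2 * mW ^ 2) := by
  set L : ℝ := βW * xW + βI * xI + βD * xD with hLdef
  have hLlb := (abs_le.mp hLb).1
  have hLub := (abs_le.mp hLb).2
  have TS : 2 * mS * (b + ε * xR + θ * xV - L * xS - (v + dH) * xS) ≤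
      (ε + θ + 2 * M2) * mS ^ 2 + ε * mR ^ 2 + θ * mV ^ 2 := by
    have s1 : mS * b ≤ 0 := mul_nonpos_of_nonpos_of_nonneg hmS0 hb.le
    have s2 : ε * (mS * xR) ≤ ε * (mS * mR) :=
      mul_le_mul_of_nonneg_left (mul_le_mul_of_nonpos_left hmRle hmS0) hε.le
    have s3 : ε * (2 * (mS * mR)) ≤ ε * (mS ^ 2 + mR ^ 2) :=
      mul_le_mul_of_nonneg_left (by linarith [sq_nonneg (mS - mR)]) hε.le
    have s4 : θ * (mS * xV) ≤ θ * (mS * mV) :=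
      mul_le_mul_of_nonneg_left (mul_le_mul_of_nonpos_left hmVle hmS0) hθ.le
    have s5 : θ * (2 * (mS * mV)) ≤ θ * (mS ^ 2 + mV ^ 2) :=
      mul_le_mul_of_nonneg_left (by linarith [sq_nonneg (mS - mV)]) hθ.le
    have s6 : L * (mS * xS) = L * mS ^ 2 := by rw [idS]
    have s7 : -(L * mS ^ 2) ≤ M2 * mS ^ 2 := by
      have h := mul_nonneg (by linarith : (0:ℝ) ≤ M2 + L) (sq_nonneg mS)
      linarith [h]
    have s8 : (v + dH) * (mS * xS) = (v + dH) * mS ^ 2 := by rw [idS]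
    have s9 : 0 ≤ (v + dH) * mS ^ 2 := by positivity
    linarith [s1, s2, s3, s4, s5, s6, s7, s8, s9]
  have TI : 2 * mI * (L * xS + σ * L * xV - (γ + δ + dH) * xI) ≤
      M2 * (βW * (mI ^ 2 + mW ^ 2) + 2 * βI * mI ^ 2 + βD * (mI ^ 2 + mD ^ 2)
        + (mI ^ 2 + mS ^ 2) + σ * (mI ^ 2 + mV ^ 2)) := by
    have hμ0 : βW * mW + βI * mI + βD * mD ≤ 0 := by
      linarith [mul_nonpos_of_nonneg_of_nonpos hβW.le hmW0,
        mul_nonpos_of_nonneg_of_nonpos hβI.le hmI0,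
        mul_nonpos_of_nonneg_of_nonpos hβD.le hmD0]
    have hν0 : mS + σ * mV ≤ 0 := by
      linarith [mul_nonpos_of_nonneg_of_nonpos hσ0 hmV0]
    have hμle : βW * mW + βI * mI + βD * mD ≤ L := by
      have u1 := mul_le_mul_of_nonneg_left hmWle hβW.le
      have u2 := mul_le_mul_of_nonneg_left hmIle hβI.le
      have u3 := mul_le_mul_of_nonneg_left hmDle hβD.le
      rw [hLdef]; linarith
    have hνle : mS + σ * mV ≤ xS + σ * xV := by
      have u := mul_le_mul_of_nonneg_left hmVle hσ0
      linarith
    have i1 : M2 * ((βW * mW + βI * mI + βD * mD) + (mS + σ * mV)) ≤ L * (xS + σ * xV) :=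
      prod_lb hμ0 hν0 hμle hνle hLb hSVb
    have i2 : 2 * mI * (L * (xS + σ * xV)) ≤
        2 * mI * (M2 * ((βW * mW + βI * mI + βD * mD) + (mS + σ * mV))) :=
      mul_le_mul_of_nonpos_left i1 (by linarith)
    have i3 : M2 * (βW * (2 * (mI * mW))) ≤ M2 * (βW * (mI ^ 2 + mW ^ 2)) := by
      gcongr
      linarith [sq_nonneg (mI - mW)]
    have i4 : M2 * (βD * (2 * (mI * mD))) ≤ M2 * (βD * (mI ^ 2 + mD ^ 2)) := by
      gcongr
      linarith [sq_nonneg (mI - mD)]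
    have i5 : M2 * (2 * (mI * mS)) ≤ M2 * (mI ^ 2 + mS ^ 2) := by
      gcongr
      linarith [sq_nonneg (mI - mS)]
    have i6 : M2 * (σ * (2 * (mI * mV))) ≤ M2 * (σ * (mI ^ 2 + mV ^ 2)) := by
      gcongr
      linarith [sq_nonneg (mI - mV)]
    have i7 : (γ + δ + dH) * (mI * xI) = (γ + δ + dH) * mI ^ 2 := by rw [idI]
    have i8 : 0 ≤ (γ + δ + dH) * mI ^ 2 := by positivity
    have i9 : 0 ≤ M2 * (βI * mI ^ 2) := by positivity
    linarith [i2, i3, i4, i5, i6, i7, i8, i9]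
  have TR : 2 * mR * (γ * xI - (ε + dH) * xR) ≤ γ * (mR ^ 2 + mI ^ 2) := by
    have r1 : γ * (mR * xI) ≤ γ * (mR * mI) :=
      mul_le_mul_of_nonneg_left (mul_le_mul_of_nonpos_left hmIle hmR0) hγ.le
    have r2 : γ * (2 * (mR * mI)) ≤ γ * (mR ^ 2 + mI ^ 2) :=
      mul_le_mul_of_nonneg_left (by linarith [sq_nonneg (mR - mI)]) hγ.le
    have r3 : (ε + dH) * (mR * xR) = (ε + dH) * mR ^ 2 := by rw [idR]
    have r4 : 0 ≤ (ε + dH) * mR ^ 2 := by positivity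
    linarith [r1, r2, r3, r4]
  have TV : 2 * mV * (v * xS - θ * xV - σ * L * xV - dH * xV) ≤
      v * (mV ^ 2 + mS ^ 2) + 2 * M2 * mV ^ 2 := by
    have v1 : v * (mV * xS) ≤ v * (mV * mS) :=
      mul_le_mul_of_nonneg_left (mul_le_mul_of_nonpos_left hmSle hmV0) hv.le
    have v2 : v * (2 * (mV * mS)) ≤ v * (mV ^ 2 + mS ^ 2) :=
      mul_le_mul_of_nonneg_left (by linarith [sq_nonneg (mV - mS)]) hv.le
    have v3 : θ * (mV * xV) = θ * mV ^ 2 := by rw [idV]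
    have v4 : 0 ≤ θ * mV ^ 2 := by positivity
    have v5 : dH * (mV * xV) = dH * mV ^ 2 := by rw [idV]
    have v6 : 0 ≤ dH * mV ^ 2 := by positivity
    have hσL : -M2 ≤ σ * L := by
      linarith [mul_nonneg hσ0 (by linarith : (0:ℝ) ≤ L + M2),
        mul_nonneg (by linarith : (0:ℝ) ≤ 1 - σ) hM2]
    have v7 : σ * L * (mV * xV) = (σ * L) * mV ^ 2 := by rw [idV]
    have v8 : -((σ * L) * mV ^ 2) ≤ M2 * mV ^ 2 := by
      have h := mul_nonneg (by linarith : (0:ℝ) ≤ M2 + σ * L) (sq_nonneg mV)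
      linarith [h]
    linarith [v1, v2, v3, v4, v5, v6, v7, v8]
  have TD : 2 * mD * (δ * xI - e * xD) ≤ δ * (mD ^ 2 + mI ^ 2) := by
    have r1 : δ * (mD * xI) ≤ δ * (mD * mI) :=
      mul_le_mul_of_nonneg_left (mul_le_mul_of_nonpos_left hmIle hmD0) hδ.le
    have r2 : δ * (2 * (mD * mI)) ≤ δ * (mD ^ 2 + mI ^ 2) :=
      mul_le_mul_of_nonneg_left (by linarith [sq_nonneg (mD - mI)]) hδ.le
    have r3 : e * (mD * xD) = e * mD ^ 2 := by rw [idD]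
    have r4 : 0 ≤ e * mD ^ 2 := by positivity
    linarith [r1, r2, r3, r4]
  have TW : 2 * mW * (ζ * xI - dC * xW) ≤ ζ * (mW ^ 2 + mI ^ 2) := by
    have r1 : ζ * (mW * xI) ≤ ζ * (mW * mI) :=
      mul_le_mul_of_nonneg_left (mul_le_mul_of_nonpos_left hmIle hmW0) hζ.le
    have r2 : ζ * (2 * (mW * mI)) ≤ ζ * (mW ^ 2 + mI ^ 2) :=
      mul_le_mul_of_nonneg_left (by linarith [sq_nonneg (mW - mI)]) hζ.le
    have r3 : dC * (mW * xW) = dC * mW ^ 2 := by rw [idW]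
    have r4 : 0 ≤ dC * mW ^ 2 := by positivity
    linarith [r1, r2, r3, r4]
  have cS : 0 ≤ (A - (ε + θ + 2 * M2 + M2 + v)) * mS ^ 2 :=
    mul_nonneg (by linarith) (sq_nonneg _)
  have cI : 0 ≤ (A - (M2 * (βW + 2 * βI + βD + 1 + σ) + γ + δ + ζ)) * mI ^ 2 :=
    mul_nonneg (by linarith) (sq_nonneg _)
  have cR : 0 ≤ (A - (ε + γ)) * mR ^ 2 :=
    mul_nonneg (by linarith) (sq_nonneg _)
  have cV : 0 ≤ (A - (θ + M2 * σ + v + 2 * M2)) * mV ^ 2 :=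
    mul_nonneg (by linarith) (sq_nonneg _)
  have cD : 0 ≤ (A - (M2 * βD + δ)) * mD ^ 2 :=
    mul_nonneg (by linarith) (sq_nonneg _)
  have cW : 0 ≤ (A - (M2 * βW + ζ)) * mW ^ 2 :=
    mul_nonneg (by linarith) (sq_nonneg _)
  linarith [TS, TI, TR, TV, TD, TW, cS, cI, cR, cV, cD, cW]

theorem sirvdw_nonneg (b dH ε θ v γ δ e ζ dC βW βI βD σ : ℝ)
    (hb : 0 < b) (hdH : 0 < dH) (hε : 0 < ε) (hθ : 0 < θ) (hv : 0 < v)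
    (hγ : 0 < γ) (hδ : 0 < δ) (he : 0 < e) (hζ : 0 < ζ) (hdC : 0 < dC)
    (hβW : 0 < βW) (hβI : 0 < βI) (hβD : 0 < βD) (hσ : σ ∈ Set.Icc (0:ℝ) 1)
    (S I R V D W : ℝ → ℝ)
    (hSd : Differentiable ℝ S) (hId : Differentiable ℝ I) (hRd : Differentiable ℝ R)
    (hVd : Differentiable ℝ V) (hDd : Differentiable ℝ D) (hWd : Differentiable ℝ W)
    (hS : ∀ t, deriv S t =
      b + ε * R t + θ * V t - (βW * W t + βI * I t + βD * D t) * S t - (v + dH) * S t)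
    (hI : ∀ t, deriv I t =
      (βW * W t + βI * I t + βD * D t) * S t + σ * (βW * W t + βI * I t + βD * D t) * V t
        - (γ + δ + dH) * I t)
    (hR : ∀ t, deriv R t = γ * I t - (ε + dH) * R t)
    (hV : ∀ t, deriv V t =
      v * S t - θ * V t - σ * (βW * W t + βI * I t + βD * D t) * V t - dH * V t)
    (hD : ∀ t, deriv D t = δ * I t - e * D t)
    (hW : ∀ t, deriv W t = ζ * I t - dC * W t)
    (h0S : 0 ≤ S 0) (h0I : 0 ≤ I 0) (h0R : 0 ≤ R 0) (h0V : 0 ≤ V 0)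
    (h0D : 0 ≤ D 0) (h0W : 0 ≤ W 0) :
    ∀ t, 0 ≤ t →
      0 ≤ S t ∧ 0 ≤ I t ∧ 0 ≤ R t ∧ 0 ≤ V t ∧ 0 ≤ D t ∧ 0 ≤ W t := by
  intro t ht
  obtain ⟨hσ0, hσ1⟩ := hσ
  -- bounds on the compact interval [0,t]
  obtain ⟨CS, hCS⟩ := (isCompact_Icc : IsCompact (Set.Icc (0:ℝ) t)).exists_bound_of_continuousOn
    hSd.continuous.continuousOn
  obtain ⟨CI, hCI⟩ := (isCompact_Icc : IsCompact (Set.Icc (0:ℝ) t)).exists_bound_of_continuousOn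
    hId.continuous.continuousOn
  obtain ⟨CV, hCV⟩ := (isCompact_Icc : IsCompact (Set.Icc (0:ℝ) t)).exists_bound_of_continuousOn
    hVd.continuous.continuousOn
  obtain ⟨CD, hCD⟩ := (isCompact_Icc : IsCompact (Set.Icc (0:ℝ) t)).exists_bound_of_continuousOn
    hDd.continuous.continuousOn
  obtain ⟨CW, hCW⟩ := (isCompact_Icc : IsCompact (Set.Icc (0:ℝ) t)).exists_bound_of_continuousOn
    hWd.continuous.continuousOn
  have hmem0 : (0:ℝ) ∈ Set.Icc (0:ℝ) t := Set.left_mem_Icc.mpr ht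
  have hCS0 : 0 ≤ CS := le_trans (norm_nonneg _) (hCS 0 hmem0)
  have hCI0 : 0 ≤ CI := le_trans (norm_nonneg _) (hCI 0 hmem0)
  have hCV0 : 0 ≤ CV := le_trans (norm_nonneg _) (hCV 0 hmem0)
  have hCD0 : 0 ≤ CD := le_trans (norm_nonneg _) (hCD 0 hmem0)
  have hCW0 : 0 ≤ CW := le_trans (norm_nonneg _) (hCW 0 hmem0)
  obtain ⟨M, hM, hbS, hbI, hbV, hbD, hbW⟩ :
      ∃ M : ℝ, 0 ≤ M ∧ (∀ s, 0 ≤ s → s ≤ t → |S s| ≤ M) ∧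
        (∀ s, 0 ≤ s → s ≤ t → |I s| ≤ M) ∧ (∀ s, 0 ≤ s → s ≤ t → |V s| ≤ M) ∧
        (∀ s, 0 ≤ s → s ≤ t → |D s| ≤ M) ∧ (∀ s, 0 ≤ s → s ≤ t → |W s| ≤ M) := by
    refine ⟨CS + CI + CV + CD + CW, by positivity, ?_, ?_, ?_, ?_, ?_⟩
    · intro s h1 h2; have := hCS s ⟨h1, h2⟩; rw [Real.norm_eq_abs] at this; linarith
    · intro s h1 h2; have := hCI s ⟨h1, h2⟩; rw [Real.norm_eq_abs] at this; linarith
    · intro s h1 h2; have := hCV s ⟨h1, h2⟩; rw [Real.norm_eq_abs] at this; linarith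
    · intro s h1 h2; have := hCD s ⟨h1, h2⟩; rw [Real.norm_eq_abs] at this; linarith
    · intro s h1 h2; have := hCW s ⟨h1, h2⟩; rw [Real.norm_eq_abs] at this; linarith
  obtain ⟨M2, hM2, hLball, hSVball⟩ :
      ∃ M2 : ℝ, 0 ≤ M2 ∧
        (∀ s, 0 ≤ s → s ≤ t → |βW * W s + βI * I s + βD * D s| ≤ M2) ∧
        (∀ s, 0 ≤ s → s ≤ t → |S s + σ * V s| ≤ M2) := by
    refine ⟨(βW + βI + βD) * M + 2 * M, by positivity, ?_, ?_⟩
    · intro s h1 h2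
      have w1 := hbW s h1 h2; have i1 := hbI s h1 h2; have d1 := hbD s h1 h2
      rw [abs_le] at w1 i1 d1 ⊢
      constructor
      · linarith [mul_nonneg hβW.le (by linarith : (0:ℝ) ≤ W s + M),
          mul_nonneg hβI.le (by linarith : (0:ℝ) ≤ I s + M),
          mul_nonneg hβD.le (by linarith : (0:ℝ) ≤ D s + M), hM]
      · linarith [mul_nonneg hβW.le (by linarith : (0:ℝ) ≤ M - W s),
          mul_nonneg hβI.le (by linarith : (0:ℝ) ≤ M - I s),
          mul_nonneg hβD.le (by linarith : (0:ℝ) ≤ M - D s), hM]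
    · intro s h1 h2
      have s1 := hbS s h1 h2; have v1 := hbV s h1 h2
      rw [abs_le] at s1 v1 ⊢
      constructor
      · linarith [mul_nonneg hσ0 (by linarith : (0:ℝ) ≤ V s + M),
          mul_nonneg (by linarith : (0:ℝ) ≤ 1 - σ) hM,
          mul_nonneg (by positivity : (0:ℝ) ≤ βW + βI + βD) hM]
      · linarith [mul_nonneg hσ0 (by linarith : (0:ℝ) ≤ M - V s),
          mul_nonneg (by linarith : (0:ℝ) ≤ 1 - σ) hM,
          mul_nonneg (by positivity : (0:ℝ) ≤ βW + βI + βD) hM]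
  obtain ⟨A, hAS, hAI, hAR, hAV, hAD, hAW⟩ :
      ∃ A : ℝ, ε + θ + 2 * M2 + M2 + v ≤ A ∧
        M2 * (βW + 2 * βI + βD + 1 + σ) + γ + δ + ζ ≤ A ∧ ε + γ ≤ A ∧
        θ + M2 * σ + v + 2 * M2 ≤ A ∧ M2 * βD + δ ≤ A ∧ M2 * βW + ζ ≤ A := by
    refine ⟨ε + θ + γ + v + δ + ζ + M2 * (βW + 2 * βI + βD + 1 + σ) + 3 * M2,
      ?_, ?_, ?_, ?_, ?_, ?_⟩ <;>
      linarith [hM2, mul_nonneg hM2 hβW.le, mul_nonneg hM2 hβI.le,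
        mul_nonneg hM2 hβD.le, mul_nonneg hM2 hσ0]
  -- the Lyapunov function
  set φ : ℝ → ℝ := fun τ =>
    ((S τ) ^ 2 - S τ * |S τ|) + ((I τ) ^ 2 - I τ * |I τ|) + ((R τ) ^ 2 - R τ * |R τ|)
      + ((V τ) ^ 2 - V τ * |V τ|) + ((D τ) ^ 2 - D τ * |D τ|)
      + ((W τ) ^ 2 - W τ * |W τ|) with hφdef
  have hφ : ∀ s, HasDerivAt φ
      (4 * min (S s) 0 * deriv S s + 4 * min (I s) 0 * deriv I s
        + 4 * min (R s) 0 * deriv R s + 4 * min (V s) 0 * deriv V s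
        + 4 * min (D s) 0 * deriv D s + 4 * min (W s) 0 * deriv W s) s := by
    intro s
    exact ((((((hasDerivAt_g (S s)).comp s (hSd s).hasDerivAt).add
      ((hasDerivAt_g (I s)).comp s (hId s).hasDerivAt)).add
      ((hasDerivAt_g (R s)).comp s (hRd s).hasDerivAt)).add
      ((hasDerivAt_g (V s)).comp s (hVd s).hasDerivAt)).add
      ((hasDerivAt_g (D s)).comp s (hDd s).hasDerivAt)).add
      ((hasDerivAt_g (W s)).comp s (hWd s).hasDerivAt)
  -- the key differential inequality
  have key : ∀ s, 0 ≤ s → s ≤ t → deriv φ s ≤ A * φ s := by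
    intro s h1 h2
    rw [(hφ s).deriv, hS s, hI s, hR s, hV s, hD s, hW s]
    have hφs : φ s = 2 * (min (S s) 0) ^ 2 + 2 * (min (I s) 0) ^ 2 + 2 * (min (R s) 0) ^ 2
        + 2 * (min (V s) 0) ^ 2 + 2 * (min (D s) 0) ^ 2 + 2 * (min (W s) 0) ^ 2 := by
      simp only [hφdef]
      rw [g_eq (S s), g_eq (I s), g_eq (R s), g_eq (V s), g_eq (D s), g_eq (W s)]
    rw [hφs]
    exact sirvdw_core b dH ε θ v γ δ e ζ dC βW βI βD σ M2 A hb hdH hε hθ hv hγ hδ he hζ hdC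
      hβW hβI hβD hσ0 hσ1 hM2 hAS hAI hAR hAV hAD hAW
      (S s) (I s) (R s) (V s) (D s) (W s) _ _ _ _ _ _
      (min_le_right _ _) (min_le_right _ _) (min_le_right _ _) (min_le_right _ _)
      (min_le_right _ _) (min_le_right _ _)
      (min_le_left _ _) (min_le_left _ _) (min_le_left _ _) (min_le_left _ _)
      (min_le_left _ _) (min_le_left _ _)
      (min_mul_self _) (min_mul_self _) (min_mul_self _) (min_mul_self _)
      (min_mul_self _) (min_mul_self _)
      (hLball s h1 h2) (hSVball s h1 h2)
  -- Gronwall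
  set ψ : ℝ → ℝ := fun s => φ s * Real.exp (-A * s) with hψdef
  have hψ : ∀ s, HasDerivAt ψ
      (deriv φ s * Real.exp (-A * s) + φ s * (Real.exp (-A * s) * (-A * 1))) s := by
    intro s
    have hexp : HasDerivAt (fun y : ℝ => Real.exp (-A * y)) (Real.exp (-A * s) * (-A * 1)) s :=
      ((hasDerivAt_id s).const_mul (-A)).exp
    have h2 := (hφ s).mul hexp
    rwa [← (hφ s).deriv] at h2
  have hψdiff : Differentiable ℝ ψ := fun s => (hψ s).differentiableAt
  have hder : ∀ s, 0 ≤ s → s ≤ t → deriv ψ s ≤ 0 := by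
    intro s h1 h2
    rw [(hψ s).deriv]
    have hk := key s h1 h2
    have hepos := (Real.exp_pos (-A * s)).le
    have hmul := mul_le_mul_of_nonneg_right hk hepos
    linarith [hmul]
  have hψt := le_of_deriv_nonpos hψdiff ht hder
  have hφ0 : φ 0 = 0 := by
    simp only [hφdef]
    rw [g_zero h0S, g_zero h0I, g_zero h0R, g_zero h0V, g_zero h0D, g_zero h0W]
    norm_num
  have hψ0 : ψ 0 = 0 := by
    simp only [hψdef]; rw [hφ0]; ring
  have hφt_nonneg : 0 ≤ φ t := by
    simp only [hφdef]
    linarith [g_nonneg (S t), g_nonneg (I t), g_nonneg (R t), g_nonneg (V t),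
      g_nonneg (D t), g_nonneg (W t)]
  have hφt : φ t ≤ 0 := by
    rw [hψ0] at hψt
    simp only [hψdef] at hψt
    nlinarith [Real.exp_pos (-A * t), hψt, hφt_nonneg]
  have hφteq : φ t = 0 := le_antisymm hφt hφt_nonneg
  simp only [hφdef] at hφteq
  have g1 := g_nonneg (S t); have g2 := g_nonneg (I t); have g3 := g_nonneg (R t)
  have g4 := g_nonneg (V t); have g5 := g_nonneg (D t); have g6 := g_nonneg (W t)
  exact ⟨nonneg_of_g_zero (by linarith), nonneg_of_g_zero (by linarith),
    nonneg_of_g_zero (by linarith), nonneg_of_g_zero (by linarith),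
    nonneg_of_g_zero (by linarith), nonneg_of_g_zero (by linarith)⟩

/-- The region Ω = { (S,I,R,V,D,W) ∈ ℝ₊⁶ : S+I+R+V ≤ b/d_H, W ≤ ζb/(d_C d_H),
D ≤ δb/(e d_H) } is positively invariant under the flow of the SIRVDW system. -/
theorem stmt_2 (b dH ε θ v γ δ e ζ dC βW βI βD σ : ℝ)
    (hb : 0 < b) (hdH : 0 < dH) (hε : 0 < ε) (hθ : 0 < θ) (hv : 0 < v)
    (hγ : 0 < γ) (hδ : 0 < δ) (he : 0 < e) (hζ : 0 < ζ) (hdC : 0 < dC)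
    (hβW : 0 < βW) (hβI : 0 < βI) (hβD : 0 < βD) (hσ : σ ∈ Set.Icc (0:ℝ) 1)
    (S I R V D W : ℝ → ℝ)
    (hSd : Differentiable ℝ S) (hId : Differentiable ℝ I) (hRd : Differentiable ℝ R)
    (hVd : Differentiable ℝ V) (hDd : Differentiable ℝ D) (hWd : Differentiable ℝ W)
    (hS : ∀ t, deriv S t =
      b + ε * R t + θ * V t - (βW * W t + βI * I t + βD * D t) * S t - (v + dH) * S t)
    (hI : ∀ t, deriv I t =
      (βW * W t + βI * I t + βD * D t) * S t + σ * (βW * W t + βI * I t + βD * D t) * V t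
        - (γ + δ + dH) * I t)
    (hR : ∀ t, deriv R t = γ * I t - (ε + dH) * R t)
    (hV : ∀ t, deriv V t =
      v * S t - θ * V t - σ * (βW * W t + βI * I t + βD * D t) * V t - dH * V t)
    (hD : ∀ t, deriv D t = δ * I t - e * D t)
    (hW : ∀ t, deriv W t = ζ * I t - dC * W t)
    (h0 : 0 ≤ S 0 ∧ 0 ≤ I 0 ∧ 0 ≤ R 0 ∧ 0 ≤ V 0 ∧ 0 ≤ D 0 ∧ 0 ≤ W 0 ∧
      S 0 + I 0 + R 0 + V 0 ≤ b / dH ∧ W 0 ≤ ζ * b / (dC * dH) ∧ D 0 ≤ δ * b / (e * dH)) :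
    ∀ t, 0 ≤ t →
      0 ≤ S t ∧ 0 ≤ I t ∧ 0 ≤ R t ∧ 0 ≤ V t ∧ 0 ≤ D t ∧ 0 ≤ W t ∧
      S t + I t + R t + V t ≤ b / dH ∧ W t ≤ ζ * b / (dC * dH) ∧ D t ≤ δ * b / (e * dH) := by
  obtain ⟨h0S, h0I, h0R, h0V, h0D, h0W, h0N, h0Wb, h0Db⟩ := h0
  have hnn := sirvdw_nonneg b dH ε θ v γ δ e ζ dC βW βI βD σ hb hdH hε hθ hv hγ hδ he hζ hdC
    hβW hβI hβD hσ S I R V D W hSd hId hRd hVd hDd hWd hS hI hR hV hD hW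
    h0S h0I h0R h0V h0D h0W
  -- bound on the total population N = S + I + R + V
  have hNd : ∀ s, HasDerivAt (fun τ => S τ + I τ + R τ + V τ)
      (deriv S s + deriv I s + deriv R s + deriv V s) s := fun s =>
    (((hSd s).hasDerivAt.add (hId s).hasDerivAt).add (hRd s).hasDerivAt).add
      (hVd s).hasDerivAt
  have hN : ∀ τ, 0 ≤ τ → S τ + I τ + R τ + V τ ≤ b / dH := by
    intro τ hτ
    have hud : ∀ s, HasDerivAt
        (fun s => (S s + I s + R s + V s - b / dH) * Real.exp (dH * s))
        ((deriv S s + deriv I s + deriv R s + deriv V s) * Real.exp (dH * s)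
          + (S s + I s + R s + V s - b / dH) * (Real.exp (dH * s) * (dH * 1))) s :=
      fun s => ((hNd s).sub_const _).mul (((hasDerivAt_id s).const_mul dH).exp)
    have hdiff : Differentiable ℝ
        (fun s => (S s + I s + R s + V s - b / dH) * Real.exp (dH * s)) :=
      fun s => (hud s).differentiableAt
    have hle := le_of_deriv_nonpos hdiff hτ (fun s h1 h2 => by
      rw [(hud s).deriv, hS s, hI s, hR s, hV s]
      have hI0 := (hnn s h1).2.1
      have hexp := (Real.exp_pos (dH * s)).le
      have hbb : dH * (b / dH) * Real.exp (dH * s) = b * Real.exp (dH * s) := by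
        rw [mul_div_cancel₀ b hdH.ne']
      linarith [mul_nonneg (mul_nonneg hδ.le hI0) hexp, hbb])
    have hu0 : (S 0 + I 0 + R 0 + V 0 - b / dH) * Real.exp (dH * 0) ≤ 0 :=
      mul_nonpos_of_nonpos_of_nonneg (by linarith) (Real.exp_pos _).le
    have hfin : (S τ + I τ + R τ + V τ - b / dH) * Real.exp (dH * τ) ≤ 0 :=
      le_trans hle hu0
    nlinarith [Real.exp_pos (dH * τ), hfin]
  -- bound on W
  have hWb : ∀ τ, 0 ≤ τ → W τ ≤ ζ * b / (dC * dH) := by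
    intro τ hτ
    have hud : ∀ s, HasDerivAt
        (fun s => (W s - ζ * b / (dC * dH)) * Real.exp (dC * s))
        (deriv W s * Real.exp (dC * s)
          + (W s - ζ * b / (dC * dH)) * (Real.exp (dC * s) * (dC * 1))) s :=
      fun s => (((hWd s).hasDerivAt).sub_const _).mul (((hasDerivAt_id s).const_mul dC).exp)
    have hdiff : Differentiable ℝ
        (fun s => (W s - ζ * b / (dC * dH)) * Real.exp (dC * s)) :=
      fun s => (hud s).differentiableAt
    have hle := le_of_deriv_nonpos hdiff hτ (fun s h1 h2 => by
      rw [(hud s).deriv, hW s]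
      have hexp := (Real.exp_pos (dC * s)).le
      obtain ⟨hS0, hI0, hR0, hV0, hD0, hW0⟩ := hnn s h1
      have hIle : I s ≤ b / dH := by linarith [hN s h1]
      have hbb : dC * (ζ * b / (dC * dH)) * Real.exp (dC * s)
          = ζ * (b / dH) * Real.exp (dC * s) := by
        rw [show dC * (ζ * b / (dC * dH)) = ζ * (b / dH) by
          field_simp]
      have hmul : ζ * I s * Real.exp (dC * s) ≤ ζ * (b / dH) * Real.exp (dC * s) :=
        mul_le_mul_of_nonneg_right (mul_le_mul_of_nonneg_left hIle hζ.le) hexp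
      linarith [hmul, hbb])
    have hu0 : (W 0 - ζ * b / (dC * dH)) * Real.exp (dC * 0) ≤ 0 :=
      mul_nonpos_of_nonpos_of_nonneg (by linarith) (Real.exp_pos _).le
    have hfin : (W τ - ζ * b / (dC * dH)) * Real.exp (dC * τ) ≤ 0 := le_trans hle hu0
    nlinarith [Real.exp_pos (dC * τ), hfin]
  -- bound on D
  have hDb : ∀ τ, 0 ≤ τ → D τ ≤ δ * b / (e * dH) := by
    intro τ hτ
    have hud : ∀ s, HasDerivAt
        (fun s => (D s - δ * b / (e * dH)) * Real.exp (e * s))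
        (deriv D s * Real.exp (e * s)
          + (D s - δ * b / (e * dH)) * (Real.exp (e * s) * (e * 1))) s :=
      fun s => (((hDd s).hasDerivAt).sub_const _).mul (((hasDerivAt_id s).const_mul e).exp)
    have hdiff : Differentiable ℝ
        (fun s => (D s - δ * b / (e * dH)) * Real.exp (e * s)) :=
      fun s => (hud s).differentiableAt
    have hle := le_of_deriv_nonpos hdiff hτ (fun s h1 h2 => by
      rw [(hud s).deriv, hD s]
      have hexp := (Real.exp_pos (e * s)).le
      obtain ⟨hS0, hI0, hR0, hV0, hD0, hW0⟩ := hnn s h1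
      have hIle : I s ≤ b / dH := by linarith [hN s h1]
      have hbb : e * (δ * b / (e * dH)) * Real.exp (e * s)
          = δ * (b / dH) * Real.exp (e * s) := by
        rw [show e * (δ * b / (e * dH)) = δ * (b / dH) by
          field_simp]
      have hmul : δ * I s * Real.exp (e * s) ≤ δ * (b / dH) * Real.exp (e * s) :=
        mul_le_mul_of_nonneg_right (mul_le_mul_of_nonneg_left hIle hδ.le) hexp
      linarith [hmul, hbb])
    have hu0 : (D 0 - δ * b / (e * dH)) * Real.exp (e * 0) ≤ 0 :=
      mul_nonpos_of_nonpos_of_nonneg (by linarith) (Real.exp_pos _).le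
    have hfin : (D τ - δ * b / (e * dH)) * Real.exp (e * τ) ≤ 0 := le_trans hle hu0
    nlinarith [Real.exp_pos (e * τ), hfin]
  intro t ht
  obtain ⟨htS, htI, htR, htV, htD, htW⟩ := hnn t ht
  exact ⟨htS, htI, htR, htV, htD, htW, hN t ht, hWb t ht, hDb t ht⟩
end

section
/- The spectral radius of the next generation matrix F·U⁻¹, where F has first row ((S*+σV*)β_I, (S*+σV*)β_D, (S*+σV*)β_W) and zeros elsewhere, and U is the lower-triangular matrix with diagonal (γ+δ+d_H, e, d_C) and subdiagonal entries U₂₁ = −δ, U₃₁ = −ζ (other off-diagonal entries zero), equals R_v = (e d_C β_I + δ d_C β_D + e ζ β_W)(θ + σv + d_H)·b / (e d_C (γ+δ+d_H)(θ+v+d_H) d_H). -/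
open Matrix

lemma specrad_aux (r : ℝ) (hr : 0 ≤ r) (s t : ℂ) :
    spectralRadius ℂ (!![(r:ℂ), s, t; 0,0,0;0,0,0]) = ENNReal.ofReal r := by
  set M : Matrix (Fin 3) (Fin 3) ℂ := !![(r:ℂ), s, t; 0,0,0;0,0,0] with hM
  have hspec : spectrum ℂ M = {(r:ℂ), 0} := by
    ext x
    rw [spectrum.mem_iff, Matrix.isUnit_iff_isUnit_det]
    have hdet : (algebraMap ℂ (Matrix (Fin 3) (Fin 3) ℂ) x - M).det
        = (x - r) * (x * x) := by
      simp [hM, Matrix.det_fin_three, Matrix.sub_apply, Matrix.algebraMap_matrix_apply, Matrix.vecHead, Matrix.vecTail]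
      ring
    rw [hdet, isUnit_iff_ne_zero, not_not, mul_eq_zero, mul_self_eq_zero,
      sub_eq_zero]
    simp [Set.mem_insert_iff]
  rw [spectralRadius, hspec]
  rw [show ({(r:ℂ), 0} : Set ℂ) = insert (r:ℂ) {0} from rfl, iSup_insert, iSup_singleton]
  simp [← enorm_eq_nnnorm, Real.enorm_eq_ofReal hr]

/-- The spectral radius of the next generation matrix F·U⁻¹ equals
R_v = (e d_C β_I + δ d_C β_D + e ζ β_W)(θ + σv + d_H)·b /
      (e d_C (γ+δ+d_H)(θ+v+d_H) d_H). -/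
theorem stmt_5 (βI βD βW γ δ dH e ζ dC θ v b σ : ℝ)
    (hβI : 0 < βI) (hβD : 0 < βD) (hβW : 0 < βW) (hγ : 0 < γ) (hδ : 0 < δ)
    (hdH : 0 < dH) (he : 0 < e) (hζ : 0 < ζ) (hdC : 0 < dC) (hθ : 0 < θ)
    (hv : 0 < v) (hb : 0 < b) (hσ : σ ∈ Set.Icc (0:ℝ) 1)
    (Sstar Vstar : ℝ)
    (hSstar : Sstar = (θ + dH) / (θ + v + dH) * (b / dH))
    (hVstar : Vstar = v / (θ + v + dH) * (b / dH))
    (F U : Matrix (Fin 3) (Fin 3) ℝ)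
    (hF : F = !![(Sstar + σ * Vstar) * βI, (Sstar + σ * Vstar) * βD,
                   (Sstar + σ * Vstar) * βW; 0, 0, 0; 0, 0, 0])
    (hU : U = !![γ + δ + dH, 0, 0; -δ, e, 0; -ζ, 0, dC]) :
    spectralRadius ℂ ((F * U⁻¹).map (algebraMap ℝ ℂ)) =
      ENNReal.ofReal ((e * dC * βI + δ * dC * βD + e * ζ * βW) * (θ + σ * v + dH) * b /
        (e * dC * (γ + δ + dH) * (θ + v + dH) * dH)) := by
  set a : ℝ := γ + δ + dH with ha
  set K : ℝ := Sstar + σ * Vstar with hKdef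
  set Rv : ℝ := (e * dC * βI + δ * dC * βD + e * ζ * βW) * (θ + σ * v + dH) * b /
        (e * dC * (γ + δ + dH) * (θ + v + dH) * dH) with hRv
  have ha0 : a ≠ 0 := by positivity
  have he0 : e ≠ 0 := ne_of_gt he
  have hdC0 : dC ≠ 0 := ne_of_gt hdC
  have hdH0 : dH ≠ 0 := ne_of_gt hdH
  have hden : θ + v + dH ≠ 0 := by positivity
  have hUinv : U⁻¹ = !![a⁻¹, 0, 0; δ/(a*e), e⁻¹, 0; ζ/(a*dC), 0, dC⁻¹] := by
    apply Matrix.inv_eq_right_inv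
    rw [hU, Matrix.mul_fin_three, Matrix.one_fin_three]
    ext i j
    fin_cases i <;> fin_cases j <;> simp [Matrix.vecHead, Matrix.vecTail] <;> field_simp <;> ring
  have hFU : F * U⁻¹ = !![K * βI * a⁻¹ + K * βD * (δ/(a*e)) + K * βW * (ζ/(a*dC)),
      K * βD * e⁻¹, K * βW * dC⁻¹; 0,0,0;0,0,0] := by
    rw [hF, hUinv, Matrix.mul_fin_three]
    ext i j
    fin_cases i <;> fin_cases j <;> simp [Matrix.vecHead, Matrix.vecTail]
  have hreq : K * βI * a⁻¹ + K * βD * (δ/(a*e)) + K * βW * (ζ/(a*dC)) = Rv := by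
    have hK : K = (θ + σ * v + dH) / (θ + v + dH) * (b / dH) := by
      rw [hKdef, hSstar, hVstar]; field_simp; ring
    rw [hK, hRv, ha]
    field_simp
  have hmap : (F * U⁻¹).map (algebraMap ℝ ℂ) =
      !![(Rv : ℂ), ((K * βD * e⁻¹ : ℝ) : ℂ), ((K * βW * dC⁻¹ : ℝ) : ℂ); 0,0,0;0,0,0] := by
    rw [hFU, ← hreq]
    ext i j
    fin_cases i <;> fin_cases j <;> simp [Matrix.vecHead, Matrix.vecTail]
  rw [hmap]
  have hRvnonneg : 0 ≤ Rv := by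
    rw [hRv]
    apply div_nonneg _ (by positivity)
    have : 0 ≤ σ * v := mul_nonneg hσ.1 hv.le
    have h1 : 0 ≤ θ + σ * v + dH := by linarith
    positivity
  exact specrad_aux Rv hRvnonneg _ _
end

section
/- The linear system A·(S,R,V)ᵀ + (b,0,0)ᵀ = 0 with A = [[−v−d_H, ε, θ],[0, −ε−d_H, 0],[v, 0, −θ−d_H]] has a unique solution, and this solution has S > 0, R = 0, V > 0. -/
open Matrix

/-- The linear system A·(S,R,V)ᵀ + (b,0,0)ᵀ = 0 has a unique solution, and this
solution has S > 0, R = 0, V > 0. -/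
theorem stmt_9 (b v dH ε θ : ℝ) (hb : 0 < b) (hv : 0 < v) (hdH : 0 < dH)
    (hε : 0 < ε) (hθ : 0 < θ)
    (A : Matrix (Fin 3) (Fin 3) ℝ)
    (hA : A = !![-v - dH, ε, θ; 0, -ε - dH, 0; v, 0, -θ - dH]) :
    (∃! x : Fin 3 → ℝ, A.mulVec x + ![b, 0, 0] = 0) ∧
      ∀ x : Fin 3 → ℝ, A.mulVec x + ![b, 0, 0] = 0 →
        0 < x 0 ∧ x 1 = 0 ∧ 0 < x 2 := by
  subst hA
  have hD : 0 < dH * (v + θ + dH) := by positivity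
  set S₀ : ℝ := b * (θ + dH) / (dH * (v + θ + dH)) with hS₀
  set V₀ : ℝ := b * v / (dH * (v + θ + dH)) with hV₀
  have key : ∀ x : Fin 3 → ℝ,
      (!![-v - dH, ε, θ; 0, -ε - dH, 0; v, 0, -θ - dH]).mulVec x + ![b, 0, 0] = 0 ↔
      x = ![S₀, 0, V₀] := by
    intro x
    constructor
    · intro h
      have h0 := congrFun h 0
      have h1 := congrFun h 1
      have h2 := congrFun h 2
      simp [Matrix.mulVec, dotProduct, Fin.sum_univ_three] at h0 h1 h2
      have hx1 : x 1 = 0 := h1.resolve_left (by intro hc; linarith)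
      have hx0' : x 0 * (dH * (v + θ + dH)) = b * (θ + dH) := by
        linear_combination (-(θ + dH)) * h0 - θ * h2 + ε * (θ + dH) * hx1
      have hx2' : x 2 * (dH * (v + θ + dH)) = b * v := by
        have hne : (θ + dH) ≠ 0 := by positivity
        refine mul_left_cancel₀ hne ?_
        linear_combination (-(dH * (v + θ + dH))) * h2 + v * hx0'
      have hx0 : x 0 = S₀ := by
        rw [hS₀, eq_div_iff hD.ne']; exact hx0'
      have hx2 : x 2 = V₀ := by
        rw [hV₀, eq_div_iff hD.ne']; exact hx2'
      funext i
      fin_cases i <;> simp [hx0, hx1, hx2]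
    · intro h
      subst h
      funext i
      fin_cases i <;>
        simp [Matrix.mulVec, dotProduct, Fin.sum_univ_three, hS₀, hV₀] <;>
        field_simp <;> ring
  have hSpos : 0 < S₀ := by rw [hS₀]; positivity
  have hVpos : 0 < V₀ := by rw [hV₀]; positivity
  constructor
  · refine ⟨![S₀, 0, V₀], (key _).mpr rfl, fun y hy => (key y).mp hy⟩
  · intro x hx
    have := (key x).mp hx
    subst this
    simp [hSpos, hVpos]
end
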